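/- Under the primal error setting with coercivity constant α_A, one has ∑_{m=1}^{N} [ (eᵐ)ᵀ M eᵐ + Δt·(eᵐ)ᵀ A_sym eᵐ ] ≤ ((T + Δt)/α_A)·∑_{m=1}^{N} ‖rᵐ‖₋₁², where T = N·Δt. -/

import Mathlib

open Matrix BigOperators Finset

/-- The energy norm `‖v‖_{G*} = √(vᵀ G* v)` induced by a matrix `G`. -/
noncomputable def normG {d : ℕ} (G : Matrix (Fin d) (Fin d) ℝ) (v : Fin d → ℝ) : ℝ :=
  Real.sqrt (v ⬝ᵥ G.mulVec v)

/-- The dual norm `‖r‖₋₁ = sup_{v ≠ 0} (rᵀ v)/‖v‖_{G*}`. -/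
noncomputable def dualNorm {d : ℕ} (G : Matrix (Fin d) (Fin d) ℝ) (r : Fin d → ℝ) : ℝ :=
  ⨆ v : {v : Fin d → ℝ // v ≠ 0}, (r ⬝ᵥ (v : Fin d → ℝ)) / normG G (v : Fin d → ℝ)

/-- The symmetric part `(A + Aᵀ)/2` of a matrix. -/
noncomputable def symPart {d : ℕ} (A : Matrix (Fin d) (Fin d) ℝ) : Matrix (Fin d) (Fin d) ℝ :=
  ((1 : ℝ)/2) • (A + Aᵀ)

section Aux

/-!
Testing the scheme with `eⁿ` gives the energy identity
`qₙ + Δt aₙ = (eⁿ)ᵀ M eⁿ⁻¹ - Δt (rⁿ)ᵀ eⁿ`, with `qₙ = (eⁿ)ᵀ M eⁿ` and `aₙ = (eⁿ)ᵀ A_sym eⁿ`.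
Bounding the cross term by `(qₙ + qₙ₋₁)/2` and the residual term by Young's inequality,
`‖rⁿ‖₋₁ ‖eⁿ‖_{G*} ≤ ‖rⁿ‖₋₁²/(2α_A) + α_A ‖eⁿ‖²_{G*}/2`, whose last summand coercivity absorbs
into `aₙ/2`, yields `qₙ - qₙ₋₁ + Δt aₙ ≤ (Δt/α_A) ‖rⁿ‖₋₁²`. Telescoping from `q₀ = 0` bounds every
`qₙ` and the sum `Δt ∑ aₙ` by `(Δt/α_A) ∑ ‖rᵐ‖₋₁²`; adding the `N` bounds on the `qₙ` to the one
on `Δt ∑ aₙ` gives the factor `(N + 1) Δt = T + Δt`.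
-/

section EnergyNorm

variable {d : ℕ} {G : Matrix (Fin d) (Fin d) ℝ}

lemma dotProduct_mulVec_le_normG_mul_normG (hG : G.PosSemidef) (x y : Fin d → ℝ) :
    x ⬝ᵥ G *ᵥ y ≤ normG G x * normG G y := by
  let := G.toSeminormedAddCommGroup hG
  let := G.toInnerProductSpace hG
  convert real_inner_le_norm x y using 1
  · change _ = (G *ᵥ y) ⬝ᵥ star x
    simp [dotProduct_comm]
  · rw [@norm_eq_sqrt_re_inner ℝ, @norm_eq_sqrt_re_inner ℝ]
    change _ = √(RCLike.re ((G *ᵥ x) ⬝ᵥ star x)) * √(RCLike.re ((G *ᵥ y) ⬝ᵥ star y))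
    simp [normG, dotProduct_comm]

lemma sq_normG (hG : G.PosSemidef) (v : Fin d → ℝ) : normG G v ^ 2 = v ⬝ᵥ G *ᵥ v :=
  Real.sq_sqrt (by simpa using hG.dotProduct_mulVec_nonneg v)

lemma normG_neg (v : Fin d → ℝ) : normG G (-v) = normG G v := by
  simp [normG, mulVec_neg]

lemma normG_pos (hG : G.PosDef) {v : Fin d → ℝ} (hv : v ≠ 0) : 0 < normG G v :=
  Real.sqrt_pos.mpr (by simpa using hG.dotProduct_mulVec_pos hv)

lemma two_mul_dotProduct_mulVec_le (hG : G.PosSemidef) (x y : Fin d → ℝ) :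
    2 * (x ⬝ᵥ G *ᵥ y) ≤ x ⬝ᵥ G *ᵥ x + y ⬝ᵥ G *ᵥ y := by
  rw [← sq_normG hG x, ← sq_normG hG y]
  nlinarith [dotProduct_mulVec_le_normG_mul_normG hG x y,
    two_mul_le_add_sq (normG G x) (normG G y)]

lemma bddAbove_range_dotProduct_div_normG (hG : G.PosDef) (r : Fin d → ℝ) :
    BddAbove (Set.range fun v : {v : Fin d → ℝ // v ≠ 0} => (r ⬝ᵥ (v : Fin d → ℝ)) / normG G v) := by
  refine ⟨normG G (G⁻¹ *ᵥ r), ?_⟩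
  rintro _ ⟨⟨v, hv⟩, rfl⟩
  rw [div_le_iff₀ (normG_pos hG hv)]
  have hGr : G *ᵥ (G⁻¹ *ᵥ r) = r := by
    rw [mulVec_mulVec, mul_nonsing_inv _ hG.det_pos.ne'.isUnit, one_mulVec]
  -- `r ⬝ v = (G⁻¹ r)ᵀ G v`, so this is Cauchy–Schwarz in the `G`-inner product.
  calc r ⬝ᵥ v = v ⬝ᵥ G *ᵥ (G⁻¹ *ᵥ r) := by rw [hGr, dotProduct_comm]
    _ ≤ normG G v * normG G (G⁻¹ *ᵥ r) := dotProduct_mulVec_le_normG_mul_normG hG.posSemidef _ _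
    _ = normG G (G⁻¹ *ᵥ r) * normG G v := mul_comm _ _

lemma dotProduct_le_dualNorm_mul_normG (hG : G.PosDef) (r v : Fin d → ℝ) :
    r ⬝ᵥ v ≤ dualNorm G r * normG G v := by
  rcases eq_or_ne v 0 with rfl | hv
  · simp [normG]
  · have h := le_ciSup (bddAbove_range_dotProduct_div_normG hG r) ⟨v, hv⟩
    rwa [div_le_iff₀ (normG_pos hG hv)] at h

lemma two_mul_dotProduct_le_dualNorm_sq_div_add (hG : G.PosDef) {α : ℝ} (hα : 0 < α)
    (r v : Fin d → ℝ) :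
    2 * (r ⬝ᵥ v) ≤ dualNorm G r ^ 2 / α + α * normG G v ^ 2 := by
  rw [div_add' _ _ _ hα.ne', le_div_iff₀ hα]
  nlinarith [dotProduct_le_dualNorm_mul_normG hG r v,
    two_mul_le_add_sq (dualNorm G r) (α * normG G v)]

end EnergyNorm

lemma dotProduct_symPart_mulVec_self {d : ℕ} (A : Matrix (Fin d) (Fin d) ℝ) (v : Fin d → ℝ) :
    v ⬝ᵥ symPart A *ᵥ v = v ⬝ᵥ A *ᵥ v := by
  have hT : v ⬝ᵥ Aᵀ *ᵥ v = v ⬝ᵥ A *ᵥ v := by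
    rw [mulVec_transpose, dotProduct_comm, ← dotProduct_mulVec]
  simp only [symPart, smul_mulVec, add_mulVec, dotProduct_smul, dotProduct_add, hT, smul_eq_mul]
  ring

lemma energy_step_le {d : ℕ} {G M A : Matrix (Fin d) (Fin d) ℝ} (hG : G.PosDef)
    (hM : M.PosSemidef) {Δt αA : ℝ} (hΔt : 0 ≤ Δt) (hαA : 0 < αA)
    (hcoA : ∀ v : Fin d → ℝ, αA * normG G v ^ 2 ≤ v ⬝ᵥ symPart A *ᵥ v)
    {e e' r : Fin d → ℝ} (hstep : (M + Δt • A) *ᵥ e = M *ᵥ e' - Δt • r) :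
    e ⬝ᵥ M *ᵥ e - e' ⬝ᵥ M *ᵥ e' + Δt * (e ⬝ᵥ symPart A *ᵥ e) ≤
      Δt / αA * dualNorm G r ^ 2 := by
  have energy : e ⬝ᵥ M *ᵥ e + Δt * (e ⬝ᵥ symPart A *ᵥ e) =
      e ⬝ᵥ M *ᵥ e' + Δt * (r ⬝ᵥ -e) := by
    have h := congrArg (e ⬝ᵥ ·) hstep
    simp only [add_mulVec, smul_mulVec, dotProduct_add, dotProduct_sub, dotProduct_smul,
      smul_eq_mul] at h
    rw [dotProduct_symPart_mulVec_self, h, dotProduct_neg, dotProduct_comm r]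
    ring
  have cross := two_mul_dotProduct_mulVec_le hM e e'
  have residual : 2 * (r ⬝ᵥ -e) ≤ dualNorm G r ^ 2 / αA + e ⬝ᵥ symPart A *ᵥ e := by
    have h := two_mul_dotProduct_le_dualNorm_sq_div_add hG hαA r (-e)
    rw [normG_neg] at h
    linarith [hcoA e]
  have residual_scaled := mul_le_mul_of_nonneg_left residual hΔt
  rw [mul_add, mul_div_assoc'] at residual_scaled
  rw [div_mul_eq_mul_div]
  linarith

lemma add_sum_Icc_le_sum_Icc {q a b : ℕ → ℝ} {N : ℕ} (hq0 : q 0 = 0)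
    (h : ∀ n, 1 ≤ n → n ≤ N → q n - q (n - 1) + a n ≤ b n) :
    ∀ n ≤ N, q n + ∑ m ∈ Icc 1 n, a m ≤ ∑ m ∈ Icc 1 n, b m := by
  intro n
  induction n with
  | zero => simp [hq0]
  | succ k ih =>
    intro hk
    rw [sum_Icc_succ_top (by omega), sum_Icc_succ_top (by omega)]
    have := h (k + 1) (by omega) hk
    simp only [Nat.add_sub_cancel] at this
    linarith [ih (by omega)]

lemma sum_Icc_add_le_succ_mul_sum {q a b : ℕ → ℝ} {N : ℕ} (hq0 : q 0 = 0)
    (hq : ∀ n, 0 ≤ q n) (ha : ∀ n, 0 ≤ a n) (hb : ∀ n, 0 ≤ b n)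
    (h : ∀ n, 1 ≤ n → n ≤ N → q n - q (n - 1) + a n ≤ b n) :
    ∑ m ∈ Icc 1 N, (q m + a m) ≤ (N + 1) * ∑ m ∈ Icc 1 N, b m := by
  have partial_le := add_sum_Icc_le_sum_Icc hq0 h
  have hq_le : ∀ n ∈ Icc 1 N, q n ≤ ∑ m ∈ Icc 1 N, b m := fun n hn => by
    have hn := (mem_Icc.mp hn).2
    have := partial_le n hn
    have : ∑ m ∈ Icc 1 n, b m ≤ ∑ m ∈ Icc 1 N, b m :=
      sum_le_sum_of_subset_of_nonneg (Icc_subset_Icc_right hn) fun m _ _ => hb m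
    linarith [sum_nonneg fun m (_ : m ∈ Icc 1 n) => ha m]
  have hq_sum := sum_le_sum hq_le
  rw [sum_const, Nat.card_Icc, Nat.add_sub_cancel, nsmul_eq_mul] at hq_sum
  rw [sum_add_distrib]
  linarith [partial_le N le_rfl, hq N]

theorem stmt5_general {d : ℕ}
    (G M A : Matrix (Fin d) (Fin d) ℝ) (hG : G.PosDef) (hM : M.PosSemidef)
    (Δt : ℝ) (hΔt : 0 < Δt) (N : ℕ)
    (αA : ℝ) (hαA : 0 < αA)
    (hcoA : ∀ v : Fin d → ℝ, αA * (normG G v)^2 ≤ v ⬝ᵥ (symPart A).mulVec v)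
    (e r : ℕ → Fin d → ℝ) (he0 : e 0 = 0)
    (hstep : ∀ k, 1 ≤ k → k ≤ N →
      (M + Δt • A).mulVec (e k) = M.mulVec (e (k - 1)) - Δt • r k) :
    ∑ m ∈ Finset.Icc 1 N,
        (e m ⬝ᵥ M.mulVec (e m) + Δt * (e m ⬝ᵥ (symPart A).mulVec (e m))) ≤
      ((N * Δt + Δt) / αA) * ∑ m ∈ Finset.Icc 1 N, (dualNorm G (r m))^2 := by
  have hcoercive_nonneg : ∀ v, 0 ≤ v ⬝ᵥ symPart A *ᵥ v := fun v =>
    (mul_nonneg hαA.le (sq_nonneg _)).trans (hcoA v)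
  have hsum := sum_Icc_add_le_succ_mul_sum (N := N)
    (q := fun n => e n ⬝ᵥ M *ᵥ e n) (a := fun n => Δt * (e n ⬝ᵥ symPart A *ᵥ e n))
    (b := fun n => Δt / αA * dualNorm G (r n) ^ 2)
    (by simp [he0]) (fun n => by simpa using hM.dotProduct_mulVec_nonneg (e n))
    (fun n => mul_nonneg hΔt.le (hcoercive_nonneg (e n)))
    (fun n => by positivity)
    (fun n h1 h2 => energy_step_le hG hM hΔt.le hαA hcoA (hstep n h1 h2))
  refine hsum.trans_eq ?_
  rw [← mul_sum]
  field_simp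

theorem stmt5 {d : ℕ} (hd : 1 ≤ d)
    (G M A : Matrix (Fin d) (Fin d) ℝ) (hG : G.PosDef) (hM : M.PosSemidef)
    (Δt : ℝ) (hΔt : 0 < Δt) (N : ℕ) (hN : 1 ≤ N)
    (αA : ℝ) (hαA : 0 < αA)
    (hcoA : ∀ v : Fin d → ℝ, αA * (normG G v)^2 ≤ v ⬝ᵥ (symPart A).mulVec v)
    (e r : ℕ → Fin d → ℝ) (he0 : e 0 = 0)
    (hstep : ∀ k, 1 ≤ k → k ≤ N →
      (M + Δt • A).mulVec (e k) = M.mulVec (e (k - 1)) - Δt • r k) :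
    ∑ m ∈ Finset.Icc 1 N,
        (e m ⬝ᵥ M.mulVec (e m) + Δt * (e m ⬝ᵥ (symPart A).mulVec (e m))) ≤
      ((N * Δt + Δt) / αA) * ∑ m ∈ Finset.Icc 1 N, (dualNorm G (r m))^2 :=
  stmt5_general G M A hG hM Δt hΔt N αA hαA hcoA e r he0 hstep
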